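/- Let A = A_q ⊗ I_{L-q} be a q-local observable on (C²)^{⊗L} with ‖A‖ ≤ 1, and let Å = A − ⟨A⟩·I be its traceless part, where ⟨A⟩ = tr(A)/2^L. Then for every momentum k, | tr(Π_k A Π_k)/tr Π_k − ⟨A⟩ | = O( L / 2^{min{L-q, L/2}} ). -/

import Mathlib

open scoped Matrix

/-- The cyclic shift map (sending the basis string `σ` to `x ↦ σ(x+1)`) on binary
strings indexing the product basis of `(ℂ²)^{⊗L}`. -/
def shiftMap (L : ℕ) : (Fin L → Bool) → (Fin L → Bool) :=
  fun σ i => σ (finRotate L i)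

/-- The cyclic shift unitary `T` on `(ℂ²)^{⊗L}`, represented as a permutation
matrix in the product basis indexed by binary strings. -/
def shiftOp (L : ℕ) : Matrix (Fin L → Bool) (Fin L → Bool) ℂ :=
  Matrix.of fun σ τ => if τ = shiftMap L σ then 1 else 0

/-- The momentum projection `Π_k = (1/L) Σ_{j=0}^{L-1} e^{2πi kj/L} T^{-j}`
(where `T^{-j} = T^{L-j}` since `T^L = 1`). -/
noncomputable def momentumProj (L k : ℕ) : Matrix (Fin L → Bool) (Fin L → Bool) ℂ :=
  (L : ℂ)⁻¹ • ∑ j ∈ Finset.range L,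
    Complex.exp (2 * Real.pi * Complex.I * k * j / L) • (shiftOp L) ^ (L - j)

/-- A binary string is aperiodic if no nontrivial cyclic shift fixes it. -/
def Aperiodic (L : ℕ) (σ : Fin L → Bool) : Prop :=
  ∀ j : ℕ, 0 < j → j < L → (shiftMap L)^[j] σ ≠ σ

/-- The `q`-local operator `A = A_q ⊗ I_{L-q}` on `(ℂ²)^{⊗L}` acting nontrivially
only on the first `q` sites. -/
def localOp (L q : ℕ) (h : q ≤ L) (Aq : Matrix (Fin q → Bool) (Fin q → Bool) ℂ) :
    Matrix (Fin L → Bool) (Fin L → Bool) ℂ :=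
  Matrix.of fun σ τ =>
    (if ∀ i : Fin L, q ≤ (i : ℕ) → σ i = τ i then 1 else 0) *
      Aq (σ ∘ Fin.castLE h) (τ ∘ Fin.castLE h)

/-!
Since `T Π_k = e^{2πik/L} Π_k` and `Π_k² = Π_k`, the deviation `tr(Π_k A Π_k) - ⟨A⟩ tr Π_k` equals
`tr(Π_k Å) = (1/L) Σ_j e^{2πikj/L} tr(T^{-j} Å)` with `Å = A - ⟨A⟩`. The term `j = 0` is `tr Å = 0`.
For `j ≠ 0` the diagonal of `T^{-j} Å` vanishes except on the strings `σ` with `σ (i - j) = σ i`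
at every site `i ≥ q`, and there are at most `2 ^ max q (gcd j L) ≤ 2 ^ max q (L / 2)` of those.
The same count for `A = 1` shows that the term `j = 0` dominates `tr Π_k`, so `tr Π_k ≥ 2^L / (4L)`.
-/

open Finset Fin.NatCast Fin.CommRing

theorem norm_apply_le_norm_toEuclideanCLM {𝕜 n : Type*} [RCLike 𝕜] [Fintype n] [DecidableEq n]
    (M : Matrix n n 𝕜) (i j : n) : ‖M i j‖ ≤ ‖Matrix.toEuclideanCLM (𝕜 := 𝕜) M‖ :=
  calc ‖M i j‖ = ‖Matrix.toEuclideanCLM (𝕜 := 𝕜) M (EuclideanSpace.single j 1) i‖ := by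
        simp [EuclideanSpace.single, Matrix.mulVec_single]
    _ ≤ ‖Matrix.toEuclideanCLM (𝕜 := 𝕜) M (EuclideanSpace.single j 1)‖ := PiLp.norm_apply_le _ i
    _ ≤ ‖Matrix.toEuclideanCLM (𝕜 := 𝕜) M‖ * ‖EuclideanSpace.single j (1 : 𝕜)‖ :=
        ContinuousLinearMap.le_opNorm _ _
    _ = ‖Matrix.toEuclideanCLM (𝕜 := 𝕜) M‖ := by simp

theorem Matrix.norm_one_apply_le {n : Type*} [DecidableEq n] (i j : n) :
    ‖(1 : Matrix n n ℂ) i j‖ ≤ 1 := by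
  by_cases hij : i = j <;> simp [Matrix.one_apply, hij]

section Traceless

variable {n : Type*} [Fintype n] [DecidableEq n]

noncomputable def tracelessPart (A : Matrix n n ℂ) : Matrix n n ℂ :=
  A - (A.trace / Fintype.card n) • 1

theorem trace_mul_tracelessPart (P A : Matrix n n ℂ) :
    (P * tracelessPart A).trace = (P * A).trace - A.trace / Fintype.card n * P.trace := by
  rw [tracelessPart, Matrix.mul_sub, Matrix.trace_sub, Matrix.mul_smul, Matrix.mul_one,
    Matrix.trace_smul, smul_eq_mul]

variable [Nonempty n]

theorem trace_tracelessPart (A : Matrix n n ℂ) : (tracelessPart A).trace = 0 := by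
  have : (Fintype.card n : ℂ) ≠ 0 := Nat.cast_ne_zero.mpr Fintype.card_ne_zero
  simpa [Matrix.trace_one] using trace_mul_tracelessPart 1 A

theorem norm_tracelessPart_apply_le {A : Matrix n n ℂ} {B : ℝ} (hA : ∀ i j, ‖A i j‖ ≤ B)
    (i j : n) : ‖tracelessPart A i j‖ ≤ 2 * B := by
  have hcard : (0 : ℝ) < Fintype.card n := Nat.cast_pos.mpr Fintype.card_pos
  have htrace : ‖A.trace / Fintype.card n‖ ≤ B := by
    rw [norm_div, Complex.norm_natCast, div_le_iff₀ hcard, Matrix.trace]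
    calc ‖∑ i, A i i‖ ≤ ∑ _i : n, B := norm_sum_le_of_le _ fun i _ => hA i i
      _ = B * Fintype.card n := by simp [mul_comm]
  calc ‖tracelessPart A i j‖
      ≤ ‖A i j‖ + ‖A.trace / Fintype.card n‖ * ‖(1 : Matrix n n ℂ) i j‖ :=
        (norm_sub_le _ _).trans_eq (by rw [Matrix.smul_apply, smul_eq_mul, norm_mul])
    _ ≤ B + B * 1 :=
        add_le_add (hA i j) (mul_le_mul htrace (Matrix.norm_one_apply_le i j) (norm_nonneg _)
          ((norm_nonneg _).trans htrace))
    _ = 2 * B := by ring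

end Traceless

section Counting

variable {L : ℕ} [NeZero L]

theorem exists_add_mul_val_lt_gcd (m : ℕ) (x : Fin L) :
    ∃ n : ℕ, (x + n * m : Fin L).val < Nat.gcd m L := by
  rcases (Nat.le_of_dvd (NeZero.pos L) (Nat.gcd_dvd_right m L)).lt_or_eq with hlt | heq
  · obtain ⟨a, -, ha⟩ := Nat.exists_mul_mod_eq_gcd hlt
    set d := Nat.gcd m L
    obtain ⟨r, t, hr, hx⟩ : ∃ r t : ℕ, r < d ∧ x = ((r + d * t : ℕ) : Fin L) :=
      ⟨x.val % d, x.val / d, Nat.mod_lt _ (Nat.gcd_pos_of_pos_right m (NeZero.pos L)),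
        by rw [Nat.mod_add_div]; simp⟩
    have hma : ((m * a : ℕ) : Fin L) = d := by
      rw [← Nat.mod_add_div (m * a) L, ha]; simp
    have hL1 : ((L - 1 : ℕ) : Fin L) = -1 := by
      rw [Nat.cast_sub NeZero.one_le]; simp
    refine ⟨a * t * (L - 1), ?_⟩
    have : x + ((a * t * (L - 1) : ℕ) : Fin L) * m = (r : Fin L) := by
      rw [hx]
      push_cast at hma hL1 ⊢
      linear_combination (t * ((L - 1 : ℕ) : Fin L)) * hma + (d * t : Fin L) * hL1
    rw [this, Fin.val_natCast, Nat.mod_eq_of_lt (hr.trans hlt)]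
    exact hr
  · exact ⟨0, by simp [heq]⟩

variable {α : Type*}

theorem apply_add_mul_eq_of_periodic_from {q : ℕ} {m : Fin L} {σ : Fin L → α}
    (hσ : ∀ i : Fin L, q ≤ i.val → σ (i + m) = σ i) (x : Fin L) :
    ∀ n : ℕ, (∀ i < n, q ≤ (x + i * m).val) → σ (x + n * m) = σ x
  | 0, _ => by simp
  | n + 1, h => by
    rw [Nat.cast_succ, add_one_mul, ← add_assoc, hσ _ (h n n.lt_succ_self)]
    exact apply_add_mul_eq_of_periodic_from hσ x n fun i hi => h i (hi.trans n.lt_succ_self)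

/-- Every orbit of `· + m` meets a site `< gcd m L`, so such a `σ` is determined by its first
`max q (gcd m L)` values. -/
theorem card_filter_periodic_from_le [Fintype α] [DecidableEq α] (q m : ℕ) :
    #{σ : Fin L → α | ∀ i : Fin L, q ≤ i.val → σ (i + m) = σ i} ≤
      Fintype.card α ^ max q (Nat.gcd m L) := by
  set M := max q (Nat.gcd m L)
  have hreach (x : Fin L) : ∃ n : ℕ, (x + n * m : Fin L).val < M :=
    (exists_add_mul_val_lt_gcd m x).imp fun _ h => h.trans_le (le_max_right _ _)
  have hinj : Set.InjOn (fun (σ : Fin L → α) (i : Fin M) => σ (i.val : Fin L))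
      {σ | ∀ i : Fin L, q ≤ i.val → σ (i + m) = σ i} := by
    intro σ hσ τ hτ hστ
    funext x
    have hbefore (i) (hi : i < Nat.find (hreach x)) : q ≤ (x + i * m : Fin L).val :=
      (le_max_left _ _).trans (not_lt.mp (Nat.find_min (hreach x) hi))
    have hsame := congrFun hστ ⟨_, Nat.find_spec (hreach x)⟩
    simp only [Fin.cast_val_eq_self] at hsame
    rw [← apply_add_mul_eq_of_periodic_from hσ x _ hbefore,
      ← apply_add_mul_eq_of_periodic_from hτ x _ hbefore, hsame]
  calc #{σ : Fin L → α | ∀ i : Fin L, q ≤ i.val → σ (i + m) = σ i}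
      ≤ #(univ : Finset (Fin M → α)) :=
        card_le_card_of_injOn _ (fun _ _ => mem_coe.mpr (mem_univ _)) (by simpa using hinj)
    _ = Fintype.card α ^ M := by simp

end Counting

theorem gcd_le_div_two_of_lt {m L : ℕ} (hm : 0 < m) (hmL : m < L) : Nat.gcd m L ≤ L / 2 := by
  obtain ⟨c, hc⟩ := Nat.gcd_dvd_right m L
  have hle : Nat.gcd m L ≤ m := Nat.le_of_dvd hm (Nat.gcd_dvd_left m L)
  have hc2 : 2 ≤ c := by
    rcases c with _ | _ | c <;> omega
  rw [Nat.le_div_iff_mul_le two_pos]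
  calc Nat.gcd m L * 2 ≤ Nat.gcd m L * c := Nat.mul_le_mul_left _ hc2
    _ = L := hc.symm

section PhaseAveraging

variable {K A : Type*} [CommSemiring K] [Semiring A] [Algebra K A] {L : ℕ} {T : A} {c : K}

theorem mul_sum_smul_pow_sub (hT : T ^ L = 1) (hc : c ^ L = 1) :
    T * ∑ j ∈ range L, c ^ j • T ^ (L - j) = c • ∑ j ∈ range L, c ^ j • T ^ (L - j) := by
  cases L with
  | zero => simp
  | succ N =>
    rw [mul_sum, sum_range_succ', smul_sum, sum_range_succ]
    congr 1
    · refine sum_congr rfl fun j hj => ?_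
      rw [mul_smul_comm, ← pow_succ', smul_smul, ← pow_succ']
      congr 2
      have := mem_range.mp hj
      omega
    · rw [Nat.sub_zero, hT, pow_zero, one_smul, mul_one, Nat.add_sub_cancel_left, pow_one,
        smul_smul, ← pow_succ', hc, one_smul]

theorem pow_mul_sum_smul_pow_sub (hT : T ^ L = 1) (hc : c ^ L = 1) (n : ℕ) :
    T ^ n * ∑ j ∈ range L, c ^ j • T ^ (L - j) = c ^ n • ∑ j ∈ range L, c ^ j • T ^ (L - j) := by
  induction n with
  | zero => simp
  | succ n ih =>
    rw [pow_succ', mul_assoc, ih, mul_smul_comm, mul_sum_smul_pow_sub hT hc, smul_smul, ← pow_succ]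

theorem sum_smul_pow_sub_mul_self (hT : T ^ L = 1) (hc : c ^ L = 1) :
    (∑ j ∈ range L, c ^ j • T ^ (L - j)) * ∑ j ∈ range L, c ^ j • T ^ (L - j) =
      L • ∑ j ∈ range L, c ^ j • T ^ (L - j) := by
  rw [sum_mul, ← card_range L, ← sum_const, card_range]
  refine sum_congr rfl fun j hj => ?_
  rw [smul_mul_assoc, pow_mul_sum_smul_pow_sub hT hc, smul_smul, ← pow_add,
    Nat.add_sub_cancel' (mem_range.mp hj).le, hc, one_smul]

end PhaseAveraging

section Shift

variable {L : ℕ}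

theorem shiftOp_pow (n : ℕ) :
    shiftOp L ^ n = Matrix.of fun σ τ => if τ = (shiftMap L)^[n] σ then 1 else 0 := by
  induction n with
  | zero => ext σ τ; simp [Matrix.one_apply, eq_comm]
  | succ n ih =>
    ext σ τ
    rw [pow_succ', ih, Matrix.mul_apply, sum_eq_single (shiftMap L σ)]
    · simp only [shiftOp, Matrix.of_apply, if_pos, mul_ite, mul_one, mul_zero,
        Function.iterate_succ_apply]
      congr
    · intro ρ _ hρ
      simp [shiftOp, hρ]
    · simp

theorem trace_shiftOp_pow_mul (n : ℕ) (A : Matrix (Fin L → Bool) (Fin L → Bool) ℂ) :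
    (shiftOp L ^ n * A).trace = ∑ σ, A ((shiftMap L)^[n] σ) σ := by
  simp [Matrix.trace, Matrix.mul_apply, shiftOp_pow]

variable [NeZero L]

theorem shiftMap_iterate_apply (n : ℕ) (σ : Fin L → Bool) (i : Fin L) :
    (shiftMap L)^[n] σ i = σ (i + n) := by
  induction n generalizing σ i with
  | zero => simp
  | succ n ih =>
    rw [Function.iterate_succ_apply, ih, shiftMap, finRotate_apply]
    congr 1
    push_cast
    ring

theorem shiftOp_pow_self : shiftOp L ^ L = 1 := by
  ext σ τ
  have : (shiftMap L)^[L] σ = σ := funext fun i => by simp [shiftMap_iterate_apply]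
  simp [shiftOp_pow, this, Matrix.one_apply, eq_comm]

end Shift

open Complex in
noncomputable def momentumPhase (L k : ℕ) : ℂ := exp (2 * Real.pi * I * k / L)

section Momentum

variable {L : ℕ} (k : ℕ)

open Complex in
theorem exp_eq_momentumPhase_pow (j : ℕ) :
    exp (2 * Real.pi * I * k * j / L) = momentumPhase L k ^ j := by
  rw [momentumPhase, ← exp_nat_mul]
  congr 1
  ring

theorem norm_momentumPhase : ‖momentumPhase L k‖ = 1 := by
  rw [momentumPhase, ← Complex.norm_exp_ofReal_mul_I (2 * Real.pi * k / L)]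
  push_cast
  ring_nf

theorem momentumProj_eq_smul_sum :
    momentumProj L k =
      (L : ℂ)⁻¹ • ∑ j ∈ range L, momentumPhase L k ^ j • shiftOp L ^ (L - j) := by
  simp only [momentumProj, exp_eq_momentumPhase_pow]

theorem trace_momentumProj_mul (A : Matrix (Fin L → Bool) (Fin L → Bool) ℂ) :
    (momentumProj L k * A).trace =
      (L : ℂ)⁻¹ * ∑ j ∈ range L, momentumPhase L k ^ j * (shiftOp L ^ (L - j) * A).trace := by
  simp [momentumProj_eq_smul_sum, sum_mul, Matrix.trace_sum]

variable [NeZero L]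

theorem momentumPhase_pow_self : momentumPhase L k ^ L = 1 := by
  rw [momentumPhase, ← Complex.exp_nat_mul, ← Complex.exp_nat_mul_two_pi_mul_I k]
  congr 1
  field_simp [NeZero.ne L]

theorem momentumProj_mul_self : momentumProj L k * momentumProj L k = momentumProj L k := by
  have hL : (L : ℂ) ≠ 0 := Nat.cast_ne_zero.mpr (NeZero.ne L)
  rw [momentumProj_eq_smul_sum, smul_mul_smul_comm,
    sum_smul_pow_sub_mul_self shiftOp_pow_self (momentumPhase_pow_self k),
    ← Nat.cast_smul_eq_nsmul ℂ, smul_smul, mul_assoc, inv_mul_cancel₀ hL, mul_one]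

theorem trace_momentumProj_mul_mul_momentumProj (A : Matrix (Fin L → Bool) (Fin L → Bool) ℂ) :
    (momentumProj L k * A * momentumProj L k).trace = (momentumProj L k * A).trace := by
  rw [Matrix.trace_mul_comm, ← mul_assoc, momentumProj_mul_self]

end Momentum

def IsDiagonalBeyond {L : ℕ} {α R : Type*} [Zero R] (q : ℕ)
    (A : Matrix (Fin L → α) (Fin L → α) R) : Prop :=
  ∀ σ τ, A σ τ ≠ 0 → ∀ i : Fin L, q ≤ i.val → σ i = τ i

section DiagonalBeyond

variable {L q : ℕ}

theorem isDiagonalBeyond_localOp (h : q ≤ L) (Aq : Matrix (Fin q → Bool) (Fin q → Bool) ℂ) :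
    IsDiagonalBeyond q (localOp L q h Aq) := by
  intro σ τ hστ
  by_contra hne
  exact hστ (by simp [localOp, hne])

theorem isDiagonalBeyond_one {α : Type*} [DecidableEq α] :
    IsDiagonalBeyond q (1 : Matrix (Fin L → α) (Fin L → α) ℂ) := by
  intro σ τ hστ i _
  by_contra hne
  exact hστ (Matrix.one_apply_ne fun h => hne (congrFun h i))

theorem IsDiagonalBeyond.tracelessPart {α : Type*} [Fintype α] [DecidableEq α]
    {A : Matrix (Fin L → α) (Fin L → α) ℂ} (hA : IsDiagonalBeyond q A) :
    IsDiagonalBeyond q (tracelessPart A) := by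
  intro σ τ hστ
  by_cases heq : σ = τ
  · exact fun i _ => congrFun heq i
  · exact hA σ τ (by simpa [_root_.tracelessPart, Matrix.one_apply_ne heq] using hστ)

variable [NeZero L]

theorem norm_trace_shiftOp_pow_mul_le {A : Matrix (Fin L → Bool) (Fin L → Bool) ℂ}
    (hA : IsDiagonalBeyond q A) {B : ℝ} (hB : ∀ σ τ, ‖A σ τ‖ ≤ B) (m : ℕ) :
    ‖(shiftOp L ^ m * A).trace‖ ≤ B * 2 ^ max q (Nat.gcd m L) := by
  have hB0 : 0 ≤ B := (norm_nonneg _).trans (hB default default)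
  rw [trace_shiftOp_pow_mul, ← sum_filter_of_ne
    (p := fun σ => ∀ i : Fin L, q ≤ i.val → σ (i + m) = σ i)]
  · have hcard := card_filter_periodic_from_le (L := L) (α := Bool) q m
    rw [Fintype.card_bool] at hcard
    refine (norm_sum_le_of_le _ fun σ _ => hB _ σ).trans ?_
    rw [sum_const, nsmul_eq_mul, mul_comm]
    exact mul_le_mul_of_nonneg_left (by exact_mod_cast hcard) hB0
  · intro σ _ hσ i hi
    rw [← shiftMap_iterate_apply m σ i]
    exact hA _ _ hσ i hi

theorem norm_trace_shiftOp_pow_mul_le_of_lt {A : Matrix (Fin L → Bool) (Fin L → Bool) ℂ}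
    (hA : IsDiagonalBeyond q A) {B : ℝ} (hB : ∀ σ τ, ‖A σ τ‖ ≤ B) {m : ℕ} (hm : 0 < m)
    (hmL : m < L) : ‖(shiftOp L ^ m * A).trace‖ ≤ B * 2 ^ max q (L / 2) := by
  have hB0 : 0 ≤ B := (norm_nonneg _).trans (hB default default)
  refine (norm_trace_shiftOp_pow_mul_le hA hB m).trans ?_
  gcongr
  · norm_num
  · exact gcd_le_div_two_of_lt hm hmL

theorem norm_trace_momentumProj_mul_le {A : Matrix (Fin L → Bool) (Fin L → Bool) ℂ}
    (hA : IsDiagonalBeyond q A) {B : ℝ} (hB : ∀ σ τ, ‖A σ τ‖ ≤ B) (htr : A.trace = 0) (k : ℕ) :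
    ‖(momentumProj L k * A).trace‖ ≤ B * 2 ^ max q (L / 2) := by
  have hterm : ∀ j ∈ range L,
      ‖momentumPhase L k ^ j * (shiftOp L ^ (L - j) * A).trace‖ ≤ B * 2 ^ max q (L / 2) := by
    intro j hj
    rw [norm_mul, norm_pow, norm_momentumPhase, one_pow, one_mul]
    rcases Nat.eq_zero_or_pos j with rfl | hj0
    · rw [Nat.sub_zero, shiftOp_pow_self, one_mul, htr, norm_zero]
      exact mul_nonneg ((norm_nonneg _).trans (hB default default)) (by positivity)
    · have hjL := mem_range.mp hj
      exact norm_trace_shiftOp_pow_mul_le_of_lt hA hB (by omega) (by omega)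
  have hL : (0 : ℝ) < L := Nat.cast_pos.mpr (NeZero.pos L)
  rw [trace_momentumProj_mul, norm_mul, norm_inv, Complex.norm_natCast, inv_mul_le_iff₀ hL]
  calc _ ≤ ∑ _j ∈ range L, B * 2 ^ max q (L / 2) := norm_sum_le_of_le _ hterm
    _ = L * (B * 2 ^ max q (L / 2)) := by rw [sum_const, card_range, nsmul_eq_mul]

end DiagonalBeyond

theorem four_mul_pred_mul_two_pow_half_le (L : ℕ) : 4 * (L - 1) * 2 ^ (L / 2) ≤ 3 * 2 ^ L := by
  have key (b : ℕ) : 8 * b ≤ 3 * 2 ^ b + 4 := by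
    induction b with
    | zero => norm_num
    | succ b ih =>
      rcases b with _ | _ | b
      · norm_num
      · norm_num
      · have := Nat.one_le_two_pow (n := b)
        simp only [pow_succ] at ih ⊢
        omega
  have hsplit : 2 ^ L = 2 ^ (L / 2) * 2 ^ (L - L / 2) := by
    rw [← pow_add, Nat.add_sub_cancel' (Nat.div_le_self L 2)]
  have := key (L - L / 2)
  rw [hsplit, mul_comm (2 ^ (L / 2)), ← mul_assoc]
  exact Nat.mul_le_mul_right _ (by omega)

theorem two_rpow_min_mul_two_pow_max_le (L q : ℕ) :
    (2 : ℝ) ^ min ((L : ℝ) - q) ((L : ℝ) / 2) * 2 ^ max q (L / 2) ≤ 2 ^ L := by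
  have hmin : min ((L : ℝ) - q) ((L : ℝ) / 2) ≤ L - (max q (L / 2) : ℕ) := by
    rcases max_cases q (L / 2) with ⟨hM, _⟩ | ⟨hM, _⟩ <;> rw [hM]
    · exact min_le_left _ _
    · refine min_le_of_right_le ?_
      have : ((L / 2 : ℕ) : ℝ) * 2 ≤ L := by exact_mod_cast Nat.div_mul_le_self L 2
      linarith
  calc (2 : ℝ) ^ min ((L : ℝ) - q) ((L : ℝ) / 2) * 2 ^ max q (L / 2)
      ≤ 2 ^ ((L : ℝ) - (max q (L / 2) : ℕ)) * 2 ^ ((max q (L / 2) : ℕ) : ℝ) := by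
        rw [Real.rpow_natCast]
        gcongr
        norm_num
    _ = 2 ^ L := by
        rw [← Real.rpow_add two_pos, sub_add_cancel, Real.rpow_natCast]

section Sector

variable {L : ℕ} [NeZero L]

theorem norm_trace_momentumProj_ge (k : ℕ) :
    (2 : ℝ) ^ L / (4 * L) ≤ ‖(momentumProj L k).trace‖ := by
  have hL : (0 : ℝ) < L := Nat.cast_pos.mpr (NeZero.pos L)
  rw [← mul_one (momentumProj L k), trace_momentumProj_mul, norm_mul, norm_inv,
    Complex.norm_natCast, div_le_iff₀ (by positivity)]
  set f : ℕ → ℂ := fun j => momentumPhase L k ^ j * (shiftOp L ^ (L - j) * 1).trace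
  have h0 : 0 ∈ range L := mem_range.mpr (NeZero.pos L)
  have hf0 : f 0 = 2 ^ L := by simp [f, shiftOp_pow_self, Matrix.trace_one]
  have hrest : ‖∑ j ∈ (range L).erase 0, f j‖ ≤ ((L - 1 : ℕ) : ℝ) * 2 ^ (L / 2) := by
    have hterm : ∀ j ∈ (range L).erase 0, ‖f j‖ ≤ 2 ^ (L / 2) := by
      intro j hj
      obtain ⟨hj0, hjL⟩ := mem_erase.mp hj
      have hjL := mem_range.mp hjL
      rw [norm_mul, norm_pow, norm_momentumPhase, one_pow, one_mul]
      simpa using norm_trace_shiftOp_pow_mul_le_of_lt (q := 0) isDiagonalBeyond_one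
        Matrix.norm_one_apply_le (m := L - j) (by omega) (by omega)
    refine (norm_sum_le_of_le _ hterm).trans_eq ?_
    rw [sum_const, card_erase_of_mem h0, card_range, nsmul_eq_mul]
  have hpow : (4 * ((L - 1 : ℕ) : ℝ)) * 2 ^ (L / 2) ≤ 3 * 2 ^ L := by
    exact_mod_cast four_mul_pred_mul_two_pow_half_le L
  have hhead := norm_le_add_norm_add (f 0) (∑ j ∈ (range L).erase 0, f j)
  rw [add_sum_erase _ _ h0, hf0, norm_pow, Complex.norm_two] at hhead
  rw [show (L : ℝ)⁻¹ * ‖∑ j ∈ range L, f j‖ * (4 * L) = 4 * ‖∑ j ∈ range L, f j‖ by field_simp]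
  linarith

theorem norm_trace_sandwich_div_trace_momentumProj_sub_le {q : ℕ}
    {A : Matrix (Fin L → Bool) (Fin L → Bool) ℂ} (hA : IsDiagonalBeyond q A)
    (hA1 : ∀ σ τ, ‖A σ τ‖ ≤ 1) (k : ℕ) :
    ‖(momentumProj L k * A * momentumProj L k).trace / (momentumProj L k).trace -
        A.trace / 2 ^ L‖ ≤ 8 * L * 2 ^ max q (L / 2) / 2 ^ L := by
  have hL : (0 : ℝ) < L := Nat.cast_pos.mpr (NeZero.pos L)
  have hnum := norm_trace_momentumProj_mul_le hA.tracelessPart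
    (norm_tracelessPart_apply_le hA1) (trace_tracelessPart A) k
  have hden := norm_trace_momentumProj_ge (L := L) k
  have hP : (momentumProj L k).trace ≠ 0 :=
    norm_pos_iff.mp (lt_of_lt_of_le (by positivity) hden)
  have hcard : (Fintype.card (Fin L → Bool) : ℂ) = 2 ^ L := by simp
  have hdiff : (momentumProj L k * A * momentumProj L k).trace / (momentumProj L k).trace -
      A.trace / 2 ^ L = (momentumProj L k * tracelessPart A).trace / (momentumProj L k).trace := by
    rw [trace_momentumProj_mul_mul_momentumProj, trace_mul_tracelessPart, hcard]
    field_simp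
  rw [hdiff, norm_div]
  refine (div_le_div₀ (by positivity) hnum (by positivity) hden).trans_eq ?_
  field_simp
  ring

end Sector

/-- For a `q`-local observable `A = A_q ⊗ I_{L-q}` with `‖A‖ ≤ 1`, the normalised
trace of `A` in each momentum sector is close to the full normalised trace
`⟨A⟩ = tr A / 2^L`:
`|tr(Π_k A Π_k)/tr Π_k − ⟨A⟩| = O(L / 2^{min{L-q, L/2}})`. -/
theorem trace_within_momentum_sector :
    ∃ C : ℝ, 0 < C ∧ ∀ L q : ℕ, 1 ≤ L → ∀ h : q ≤ L,
      ∀ Aq : Matrix (Fin q → Bool) (Fin q → Bool) ℂ,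
        ‖Matrix.toEuclideanCLM (𝕜 := ℂ) (localOp L q h Aq)‖ ≤ 1 →
        ∀ k : ℕ, k < L →
          ‖(momentumProj L k * localOp L q h Aq * momentumProj L k).trace
              / (momentumProj L k).trace - (localOp L q h Aq).trace / 2 ^ L‖ ≤
            C * L / (2 : ℝ) ^ min ((L : ℝ) - q) ((L : ℝ) / 2) := by
  refine ⟨8, by norm_num, fun L q hL h Aq hA k _ => ?_⟩
  have : NeZero L := ⟨by omega⟩
  have hA1 (σ τ) : ‖localOp L q h Aq σ τ‖ ≤ 1 :=
    (norm_apply_le_norm_toEuclideanCLM _ σ τ).trans hA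
  refine (norm_trace_sandwich_div_trace_momentumProj_sub_le
    (isDiagonalBeyond_localOp h Aq) hA1 k).trans ?_
  rw [div_le_div_iff₀ (by positivity) (by positivity)]
  calc 8 * L * 2 ^ max q (L / 2) * (2 : ℝ) ^ min ((L : ℝ) - q) ((L : ℝ) / 2)
      = 8 * L * ((2 : ℝ) ^ min ((L : ℝ) - q) ((L : ℝ) / 2) * 2 ^ max q (L / 2)) := by ring
    _ ≤ 8 * L * 2 ^ L := by gcongr; exact two_rpow_min_mul_two_pow_max_le L q
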